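/- Multiplication of coalesced temporal K-elements distributes over their addition: for all coalesced temporal K-elements k, k', k'' we have k ·_T (k' +_T k'') = (k ·_T k') +_T (k ·_T k''). -/

import Mathlib

open scoped Classical

namespace TemporalK

variable {K : Type*}

/-- An interval over the time domain `{0, ..., N-1}`: a pair `(b, e)` with `b < e ≤ N`. -/
abbrev TInterval (N : ℕ) := {I : Fin (N + 1) × Fin (N + 1) // I.1 < I.2}

/-- A temporal `K`-element: a function assigning to each interval an element of `K`. -/
abbrev TempEl (N : ℕ) (K : Type*) := TInterval N → K

/-- The interval `I = (b, e)` contains the time point `T` iff `b ≤ T < e`. -/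
def Contains {N : ℕ} (I : TInterval N) (T : ℕ) : Prop :=
  (I.val.1 : ℕ) ≤ T ∧ T < (I.val.2 : ℕ)

/-- The timeslice of `𝒯` at time point `T`: the sum of `𝒯 I` over all intervals `I`
containing `T`. -/
noncomputable def slice {N : ℕ} [CommSemiring K] (𝒯 : TempEl N K) (T : ℕ) : K :=
  ∑ I ∈ Finset.univ.filter (fun I : TInterval N => Contains I T), 𝒯 I

/-- `T` is an (annotation) changepoint of `𝒯` iff `T = 0` or the timeslices at `T - 1`
and `T` differ. -/
def Changepoint {N : ℕ} [CommSemiring K] (𝒯 : TempEl N K) (T : ℕ) : Prop :=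
  T = 0 ∨ slice 𝒯 (T - 1) ≠ slice 𝒯 T

/-- `I = (b, e)` is a changepoint interval of `𝒯` iff `b` is a changepoint, `e` is a
changepoint or equals `N`, and no time point strictly between `b` and `e` is a changepoint. -/
def CPInterval {N : ℕ} [CommSemiring K] (𝒯 : TempEl N K) (I : TInterval N) : Prop :=
  Changepoint 𝒯 (I.val.1 : ℕ) ∧
    (Changepoint 𝒯 (I.val.2 : ℕ) ∨ (I.val.2 : ℕ) = N) ∧
    ∀ T : ℕ, (I.val.1 : ℕ) < T → T < (I.val.2 : ℕ) → ¬ Changepoint 𝒯 T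

/-- `K`-coalescing: maps changepoint intervals `(b, e)` to the timeslice at `b` and all
other intervals to `0`. -/
noncomputable def coal {N : ℕ} [CommSemiring K] (𝒯 : TempEl N K) : TempEl N K :=
  fun I => if CPInterval 𝒯 I then slice 𝒯 (I.val.1 : ℕ) else 0

/-- Snapshot equivalence: equal timeslices at every time point. -/
def SnapEq {N : ℕ} [CommSemiring K] (k k' : TempEl N K) : Prop :=
  ∀ T : ℕ, T < N → slice k T = slice k' T

/-- A temporal `K`-element is coalesced iff it is the `K`-coalescing of some
temporal `K`-element. -/
def Coalesced {N : ℕ} [CommSemiring K] (k : TempEl N K) : Prop :=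
  ∃ 𝒯 : TempEl N K, k = coal 𝒯

/-- Pointwise addition of temporal `K`-elements. -/
def padd {N : ℕ} [CommSemiring K] (k k' : TempEl N K) : TempEl N K :=
  fun I => k I + k' I

/-- Pointwise multiplication of temporal `K`-elements:
`(k ·_P k')(I) = Σ k(I')·k'(I'')` over all pairs `(I', I'')` whose intersection is
nonempty and equals `I`. -/
noncomputable def pmul {N : ℕ} [CommSemiring K] (k k' : TempEl N K) : TempEl N K :=
  fun I =>
    ∑ p ∈ Finset.univ.filter (fun p : TInterval N × TInterval N =>
        max (p.1.val.1 : ℕ) (p.2.val.1 : ℕ) < min (p.1.val.2 : ℕ) (p.2.val.2 : ℕ) ∧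
        (I.val.1 : ℕ) = max (p.1.val.1 : ℕ) (p.2.val.1 : ℕ) ∧
        (I.val.2 : ℕ) = min (p.1.val.2 : ℕ) (p.2.val.2 : ℕ)),
      k p.1 * k' p.2

/-- Addition of the period semiring: coalesced pointwise addition. -/
noncomputable def tadd {N : ℕ} [CommSemiring K] (k k' : TempEl N K) : TempEl N K :=
  coal (padd k k')

/-- Multiplication of the period semiring: coalesced pointwise multiplication. -/
noncomputable def tmul {N : ℕ} [CommSemiring K] (k k' : TempEl N K) : TempEl N K :=
  coal (pmul k k')

/-- The zero of the period semiring: maps every interval to `0`. -/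
def zeroT (N : ℕ) (K : Type*) [CommSemiring K] : TempEl N K := fun _ => 0

/-- The one of the period semiring: maps the interval `(0, N)` to `1` and every other
interval to `0`. -/
def oneT (N : ℕ) (K : Type*) [CommSemiring K] : TempEl N K :=
  fun I => if (I.val.1 : ℕ) = 0 ∧ (I.val.2 : ℕ) = N then 1 else 0

/-- Encoding of an annotation history `f : time points → K` as a coalesced temporal
`K`-element: coalesce the element assigning `f T` to each singleton interval `(T, T+1)`. -/
noncomputable def enc {N : ℕ} [CommSemiring K] (f : Fin N → K) : TempEl N K :=
  coal (fun I =>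
    if h : (I.val.2 : ℕ) = (I.val.1 : ℕ) + 1 then
      f ⟨(I.val.1 : ℕ), by have := I.val.2.isLt; omega⟩
    else 0)

/-- The natural preorder of the semiring `K`. -/
def nle [CommSemiring K] (a b : K) : Prop := ∃ c, a + c = b

/-- The natural preorder of the period semiring (on coalesced temporal `K`-elements). -/
def tle {N : ℕ} [CommSemiring K] (k k' : TempEl N K) : Prop :=
  ∃ k'' : TempEl N K, Coalesced k'' ∧ tadd k k'' = k'

/-- The pointwise monus: assigns `τ_T(k) −_K τ_T(k')` to each singleton interval
`(T, T+1)` and `0` to every non-singleton interval. -/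
noncomputable def pmonus {N : ℕ} [CommSemiring K] (monus : K → K → K)
    (k k' : TempEl N K) : TempEl N K :=
  fun I =>
    if (I.val.2 : ℕ) = (I.val.1 : ℕ) + 1 then
      monus (slice k (I.val.1 : ℕ)) (slice k' (I.val.1 : ℕ))
    else 0

/-- The monus of the period semiring: coalesced pointwise monus. -/
noncomputable def tmonus {N : ℕ} [CommSemiring K] (monus : K → K → K)
    (k k' : TempEl N K) : TempEl N K :=
  coal (pmonus monus k k')

end TemporalK

open TemporalK

/-!
Coalescing depends only on the timeslices of its argument and preserves them, and timeslices
turn `padd` and `pmul` into `+` and `*` of `K`. So both sides of the identity coalesce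
snapshot-equivalent elements, whose timeslices agree by distributivity in `K`.
-/

namespace TemporalK

variable {N : ℕ} {K : Type*} [CommSemiring K]

lemma Contains.lt {I : TInterval N} {T : ℕ} (h : Contains I T) : T < N := by
  have := I.val.2.isLt
  exact h.2.trans_le (by omega)

lemma slice_eq_zero_of_le (k : TempEl N K) {T : ℕ} (hT : N ≤ T) : slice k T = 0 :=
  Finset.sum_eq_zero fun _ hI => absurd (Finset.mem_filter.1 hI).2.lt (by omega)

lemma SnapEq.slice_eq {k k' : TempEl N K} (h : SnapEq k k') (T : ℕ) :
    slice k T = slice k' T := by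
  rcases lt_or_ge T N with hT | hT
  · exact h T hT
  · rw [slice_eq_zero_of_le k hT, slice_eq_zero_of_le k' hT]

lemma SnapEq.changepoint_iff {k k' : TempEl N K} (h : SnapEq k k') (T : ℕ) :
    Changepoint k T ↔ Changepoint k' T := by
  simp only [Changepoint, h.slice_eq]

lemma SnapEq.cpInterval_iff {k k' : TempEl N K} (h : SnapEq k k') (I : TInterval N) :
    CPInterval k I ↔ CPInterval k' I := by
  simp only [CPInterval, h.changepoint_iff]

lemma SnapEq.coal_eq {k k' : TempEl N K} (h : SnapEq k k') : coal k = coal k' := by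
  funext I
  simp only [coal, h.cpInterval_iff, h.slice_eq]

lemma slice_padd (k k' : TempEl N K) (T : ℕ) :
    slice (padd k k') T = slice k T + slice k' T :=
  Finset.sum_add_distrib

lemma slice_eq_of_forall_not_changepoint (𝒯 : TempEl N K) {b T : ℕ} (hbT : b ≤ T)
    (h : ∀ s, b < s → s ≤ T → ¬ Changepoint 𝒯 s) : slice 𝒯 b = slice 𝒯 T := by
  induction T, hbT using Nat.le_induction with
  | base => rfl
  | succ n hbn ih =>
    have hn : ¬ Changepoint 𝒯 (n + 1) := h (n + 1) (by omega) le_rfl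
    simp only [Changepoint, not_or, not_not, Nat.add_sub_cancel] at hn
    rw [ih fun s hs hsn => h s hs (by omega), hn.2]

lemma CPInterval.eq_of_contains {𝒯 : TempEl N K} {I J : TInterval N} {T : ℕ}
    (hI : CPInterval 𝒯 I) (hJ : CPInterval 𝒯 J) (hIT : Contains I T) (hJT : Contains J T) :
    I = J := by
  obtain ⟨hIb, hIe, hI⟩ := hI
  obtain ⟨hJb, hJe, hJ⟩ := hJ
  obtain ⟨hITb, hITe⟩ := hIT
  obtain ⟨hJTb, hJTe⟩ := hJT
  have := I.val.2.isLt
  have := J.val.2.isLt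
  have hb : (I.val.1 : ℕ) = J.val.1 := by
    by_contra hne
    rcases Nat.lt_or_gt_of_ne hne with h | h
    · exact hI _ h (by omega) hJb
    · exact hJ _ h (by omega) hIb
  have he : (I.val.2 : ℕ) = J.val.2 := by
    by_contra hne
    rcases Nat.lt_or_gt_of_ne hne with h | h
    · exact hIe.elim (hJ _ (by omega) h) (by omega)
    · exact hJe.elim (hI _ (by omega) h) (by omega)
  exact Subtype.ext (Prod.ext (Fin.ext hb) (Fin.ext he))

/-- The changepoint interval around `T` runs from the last changepoint `≤ T` to the first
changepoint `> T` (or `N`). -/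
lemma exists_cpInterval_contains (𝒯 : TempEl N K) {T : ℕ} (hT : T < N) :
    ∃ I : TInterval N, CPInterval 𝒯 I ∧ Contains I T := by
  have hP : ∃ s, T < s ∧ (Changepoint 𝒯 s ∨ s = N) := ⟨N, hT, Or.inr rfl⟩
  set b := Nat.findGreatest (Changepoint 𝒯) T
  set e := Nat.find hP
  have hbT : b ≤ T := Nat.findGreatest_le T
  have hTe : T < e ∧ (Changepoint 𝒯 e ∨ e = N) := Nat.find_spec hP
  have heN : e ≤ N := Nat.find_min' hP ⟨hT, Or.inr rfl⟩
  refine ⟨⟨(⟨b, by omega⟩, ⟨e, by omega⟩), show b < e by omega⟩,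
    ⟨Nat.findGreatest_spec (Nat.zero_le T) (Or.inl rfl), hTe.2, fun s hbs hse => ?_⟩, hbT, hTe.1⟩
  rcases le_or_gt s T with hsT | hTs
  · exact Nat.findGreatest_is_greatest hbs hsT
  · exact fun hs => Nat.find_min hP hse ⟨hTs, Or.inl hs⟩

lemma slice_coal (𝒯 : TempEl N K) {T : ℕ} (hT : T < N) : slice (coal 𝒯) T = slice 𝒯 T := by
  obtain ⟨I, hI, hIT⟩ := exists_cpInterval_contains 𝒯 hT
  rw [slice, Finset.sum_eq_single_of_mem I (Finset.mem_filter.2 ⟨Finset.mem_univ _, hIT⟩)]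
  · rw [coal, if_pos hI]
    exact slice_eq_of_forall_not_changepoint 𝒯 hIT.1 fun s hbs hsT =>
      hI.2.2 s hbs (hsT.trans_lt hIT.2)
  · intro J hJT hJI
    rw [coal, if_neg fun hJ => hJI (hJ.eq_of_contains hI (Finset.mem_filter.1 hJT).2 hIT)]

def IsInter (I J L : TInterval N) : Prop :=
  (I.val.1 : ℕ) = max (J.val.1 : ℕ) (L.val.1 : ℕ) ∧ (I.val.2 : ℕ) = min (J.val.2 : ℕ) (L.val.2 : ℕ)

lemma IsInter.contains_iff {I J L : TInterval N} (h : IsInter I J L) (T : ℕ) :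
    Contains I T ↔ Contains J T ∧ Contains L T := by
  unfold IsInter Contains at *
  omega

lemma existsUnique_isInter {J L : TInterval N} {T : ℕ} (hJ : Contains J T) (hL : Contains L T) :
    ∃! I, IsInter I J L := by
  unfold Contains at hJ hL
  have := J.val.2.isLt
  refine ⟨⟨(⟨max J.val.1 L.val.1, by omega⟩, ⟨min J.val.2 L.val.2, by omega⟩),
    Fin.mk_lt_mk.2 (by omega)⟩, ⟨rfl, rfl⟩, fun I hI => ?_⟩
  exact Subtype.ext (Prod.ext (Fin.ext hI.1) (Fin.ext hI.2))

lemma pmul_apply (k k' : TempEl N K) (I : TInterval N) :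
    pmul k k' I = ∑ p ∈ Finset.univ.filter (fun p : TInterval N × TInterval N =>
      IsInter I p.1 p.2), k p.1 * k' p.2 := by
  refine Finset.sum_congr (Finset.filter_congr fun p _ => ⟨And.right, fun h => ⟨?_, h⟩⟩)
    fun _ _ => rfl
  have := Fin.lt_def.1 I.2
  unfold IsInter at h
  omega

/-- A pair of intervals contributes to the timeslice of `pmul k k'` at `T` exactly when
both of its intervals contain `T`. -/
lemma slice_pmul (k k' : TempEl N K) (T : ℕ) :
    slice (pmul k k') T = slice k T * slice k' T := by
  set A := Finset.univ.filter fun I : TInterval N => Contains I T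
  calc slice (pmul k k') T
      = ∑ I ∈ A, ∑ p ∈ Finset.univ.filter (fun p : TInterval N × TInterval N =>
          IsInter I p.1 p.2), k p.1 * k' p.2 := by
        simp only [slice, pmul_apply, A]
    _ = ∑ p ∈ A ×ˢ A, ∑ _I ∈ Finset.univ.filter (fun I => IsInter I p.1 p.2),
          k p.1 * k' p.2 :=
        Finset.sum_comm' fun I p => by
          simp only [A, Finset.mem_filter, Finset.mem_univ, true_and, Finset.mem_product]
          exact ⟨fun h => ⟨h.2, (h.2.contains_iff T).1 h.1⟩,
            fun h => ⟨(h.1.contains_iff T).2 h.2, h.1⟩⟩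
    _ = ∑ p ∈ A ×ˢ A, k p.1 * k' p.2 := by
        refine Finset.sum_congr rfl fun p hp => ?_
        obtain ⟨hp1, hp2⟩ := Finset.mem_product.1 hp
        have hcard : (Finset.univ.filter fun I => IsInter I p.1 p.2).card = 1 := by
          simpa [Finset.card_eq_one_iff_existsUnique] using
            existsUnique_isInter (Finset.mem_filter.1 hp1).2 (Finset.mem_filter.1 hp2).2
        rw [Finset.sum_const, hcard, one_smul]
    _ = slice k T * slice k' T := by
        rw [Finset.sum_product, slice, slice, Finset.sum_mul_sum]

end TemporalK

theorem tmul_tadd_distrib_general {N : ℕ} {K : Type*} [CommSemiring K]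
    (k k' k'' : TempEl N K) :
    tmul k (tadd k' k'') = tadd (tmul k k') (tmul k k'') := by
  unfold tmul tadd
  refine SnapEq.coal_eq fun T hT => ?_
  calc slice (pmul k (coal (padd k' k''))) T
      = slice k T * (slice k' T + slice k'' T) := by
        rw [slice_pmul, slice_coal _ hT, slice_padd]
    _ = slice k T * slice k' T + slice k T * slice k'' T := mul_add _ _ _
    _ = slice (padd (coal (pmul k k')) (coal (pmul k k''))) T := by
        rw [slice_padd, slice_coal _ hT, slice_coal _ hT, slice_pmul, slice_pmul]

theorem tmul_tadd_distrib {N : ℕ} (hN : 1 ≤ N) {K : Type*} [CommSemiring K]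
    (k k' k'' : TempEl N K)
    (hk : Coalesced k) (hk' : Coalesced k') (hk'' : Coalesced k'') :
    tmul k (tadd k' k'') = tadd (tmul k k') (tmul k k'') :=
  tmul_tadd_distrib_general k k' k''
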